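/- arXiv:0904.3555 — 5 statements merged into one kernel-verified Lean document; each statement's English description precedes it below -/
import Mathlib

section
/- Let a, b, c, d ∈ ℤ and f(z) = z⁵ + a·z³ + b·z² + c·z + d. Suppose the set {(X,Y) ∈ ℚ² : Y² = X³ + 135(2a − 15)·X − 1350(5a + 2b − 26)} is infinite. Then the set of triples (x,y,z) ∈ (ℚ[t])³ of polynomials with rational coefficients satisfying x² − y³ − f(z) = t in ℚ[t] is infinite. -/
open Polynomial

namespace Stmt2Aux

noncomputable def wv (P : ℚ × ℚ) : ℚ := P.1 / 15 - 2

noncomputable def wu (P : ℚ × ℚ) : ℚ :=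
  P.2 / 45 + ((P.1 / 15 - 2) ^ 2 - 10 * (P.1 / 15 - 2) - 3) / 4

noncomputable def wga (a u v : ℚ) : ℚ :=
  (a + v ^ 3 + 6 * u * v -
    2 * ((3 * v + 1) / 2) * ((3 * u + 3 * v ^ 2 - ((3 * v + 1) / 2) ^ 2) / 2)) / 2

noncomputable def wL (a c u v : ℚ) : ℚ :=
  2 * ((3 * u + 3 * v ^ 2 - ((3 * v + 1) / 2) ^ 2) / 2) * wga a u v - 3 * u ^ 2 * v - c

noncomputable def wmu (a c d u v : ℚ) : ℚ :=
  (u ^ 3 + d - wga a u v ^ 2) * (wL a c u v)⁻¹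

noncomputable def wz (a c d : ℚ) (P : ℚ × ℚ) : ℚ[X] :=
  C ((wL a c (wu P) (wv P))⁻¹) * X + C (wmu a c d (wu P) (wv P))

noncomputable def wphi (a c d : ℚ) (P : ℚ × ℚ) : ℚ[X] × ℚ[X] × ℚ[X] :=
  (wz a c d P ^ 3 + C ((3 * wv P + 1) / 2) * wz a c d P ^ 2
      + C ((3 * wu P + 3 * wv P ^ 2 - ((3 * wv P + 1) / 2) ^ 2) / 2) * wz a c d P
      + C (wga a (wu P) (wv P)),
    wz a c d P ^ 2 + C (wv P) * wz a c d P + C (wu P),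
    wz a c d P)

lemma key (u v al be ga A B C2 D : ℚ) (z : ℚ[X]) :
    (z ^ 3 + C al * z ^ 2 + C be * z + C ga) ^ 2 - (z ^ 2 + C v * z + C u) ^ 3
      - (z ^ 5 + C A * z ^ 3 + C B * z ^ 2 + C C2 * z + C D)
    = C (2 * al - 3 * v - 1) * z ^ 5 + C (al ^ 2 + 2 * be - 3 * u - 3 * v ^ 2) * z ^ 4
      + C (2 * al * be + 2 * ga - v ^ 3 - 6 * u * v - A) * z ^ 3
      + C (be ^ 2 + 2 * al * ga - 3 * u ^ 2 - 3 * u * v ^ 2 - B) * z ^ 2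
      + C (2 * be * ga - 3 * u ^ 2 * v - C2) * z + C (ga ^ 2 - u ^ 3 - D) := by
  simp only [map_sub, map_add, map_mul, map_pow, map_ofNat, map_one]
  ring

lemma wphi_mem (a b c d : ℚ) (P : ℚ × ℚ)
    (hT : P.2 ^ 2 = P.1 ^ 3 + 135 * (2 * a - 15) * P.1 - 1350 * (5 * a + 2 * b - 26))
    (hL : wL a c (wu P) (wv P) ≠ 0) :
    (wphi a c d P).1 ^ 2 - (wphi a c d P).2.1 ^ 3
      - ((wphi a c d P).2.2 ^ 5 + C a * (wphi a c d P).2.2 ^ 3 + C b * (wphi a c d P).2.2 ^ 2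
          + C c * (wphi a c d P).2.2 + C d) = X := by
  have hfe : wu P ^ 2 + (-(wv P ^ 2 - 10 * wv P - 3) / 2) * wu P +
      ((-3) * wv P ^ 4 + 140 * wv P ^ 3 + 198 * wv P ^ 2 + 96 * wv P * a + 60 * wv P
        + 32 * a - 64 * b + 5) / (-48) = 0 := by
    simp only [wu, wv]
    linear_combination hT / 2025
  simp only [wphi]
  rw [key]
  rw [show 2 * ((3 * wv P + 1) / 2) - 3 * wv P - 1 = (0:ℚ) by ring]
  rw [show ((3 * wv P + 1) / 2) ^ 2
      + 2 * ((3 * wu P + 3 * wv P ^ 2 - ((3 * wv P + 1) / 2) ^ 2) / 2)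
      - 3 * wu P - 3 * wv P ^ 2 = (0:ℚ) by ring]
  rw [show 2 * ((3 * wv P + 1) / 2) * ((3 * wu P + 3 * wv P ^ 2 - ((3 * wv P + 1) / 2) ^ 2) / 2)
      + 2 * wga a (wu P) (wv P) - wv P ^ 3 - 6 * wu P * wv P - a = (0:ℚ) by
    simp only [wga]; ring]
  rw [show ((3 * wu P + 3 * wv P ^ 2 - ((3 * wv P + 1) / 2) ^ 2) / 2) ^ 2
      + 2 * ((3 * wv P + 1) / 2) * wga a (wu P) (wv P)
      - 3 * wu P ^ 2 - 3 * wu P * wv P ^ 2 - b = (0:ℚ) by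
    simp only [wga]; linear_combination (-3/4 : ℚ) * hfe]
  rw [show 2 * ((3 * wu P + 3 * wv P ^ 2 - ((3 * wv P + 1) / 2) ^ 2) / 2) * wga a (wu P) (wv P)
      - 3 * wu P ^ 2 * wv P - c = wL a c (wu P) (wv P) from rfl]
  simp only [C_0, zero_mul, zero_add]
  simp only [wz]
  rw [mul_add, ← mul_assoc, ← C_mul, ← C_mul]
  rw [mul_inv_cancel₀ hL, C_1, one_mul, add_assoc, ← C_add]
  rw [show wL a c (wu P) (wv P) * wmu a c d (wu P) (wv P)
      + (wga a (wu P) (wv P) ^ 2 - wu P ^ 3 - d) = (0:ℚ) by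
    simp only [wmu]
    linear_combination (wu P ^ 3 + d - wga a (wu P) (wv P) ^ 2) * mul_inv_cancel₀ hL]
  rw [C_0, add_zero]


noncomputable def wR (a b c : ℚ) : ℚ[X] :=
  C 25 * X ^ 8 + C (-3400 : ℚ) * X ^ 7 + C (120 * a - 8300) * X ^ 6
    + C (-4240 * a - 160 * b + 11000) * X ^ 5
    + C (144 * a ^ 2 - 9080 * a - 4000 * b + 160 * c + 11790) * X ^ 4
    + C (-3072 * a ^ 2 - 384 * a * b - 4960 * a - 12480 * b + 8320 * c + 3880) * X ^ 3
    + C (-6560 * a ^ 2 - 2176 * a * b + 384 * a * c - 1144 * a + 256 * b ^ 2 - 3520 * b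
        + 25920 * c + 580) * X ^ 2
    + C (-1152 * a ^ 3 - 2944 * a ^ 2 - 640 * a * b + 4864 * a * c - 144 * a + 1536 * b ^ 2
        - 512 * b * c + 352 * b + 12160 * c + 40) * X
    + C (-384 * a ^ 3 + 768 * a ^ 2 * b - 368 * a ^ 2 - 384 * a * b + 1408 * a * c - 8 * a
        + 2304 * b ^ 2 - 1536 * b * c + 96 * b + 256 * c ^ 2 + 1568 * c + 1)

noncomputable def wQ (a b v0 : ℚ) : ℚ[X] :=
  X ^ 2 + C (-(v0 ^ 2 - 10 * v0 - 3) / 2) * X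
    + C (((-3) * v0 ^ 4 + 140 * v0 ^ 3 + 198 * v0 ^ 2 + 96 * v0 * a + 60 * v0
        + 32 * a - 64 * b + 5) / (-48))

lemma wR_ne (a b c : ℚ) : wR a b c ≠ 0 := by
  intro h
  have h8 : (wR a b c).coeff 8 = 25 := by
    simp only [wR, coeff_add, coeff_C_mul, coeff_X_pow, coeff_C, coeff_X]
    norm_num
  rw [h] at h8
  simp at h8

lemma wQ_ne (a b v0 : ℚ) : wQ a b v0 ≠ 0 := by
  intro h
  have h2 : (wQ a b v0).coeff 2 = 1 := by
    simp only [wQ, coeff_add, coeff_C_mul, coeff_X_pow, coeff_C, coeff_X]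
    norm_num
  rw [h] at h2
  simp at h2

lemma wbad_root (a b c : ℚ) (P : ℚ × ℚ)
    (hT : P.2 ^ 2 = P.1 ^ 3 + 135 * (2 * a - 15) * P.1 - 1350 * (5 * a + 2 * b - 26))
    (hL0 : wL a c (wu P) (wv P) = 0) :
    (wR a b c).IsRoot (wv P) ∧ (wQ a b (wv P)).IsRoot (wu P) := by
  have hfe : wu P ^ 2 + (-(wv P ^ 2 - 10 * wv P - 3) / 2) * wu P +
      ((-3) * wv P ^ 4 + 140 * wv P ^ 3 + 198 * wv P ^ 2 + 96 * wv P * a + 60 * wv P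
        + 32 * a - 64 * b + 5) / (-48) = 0 := by
    simp only [wu, wv]
    linear_combination hT / 2025
  have hL0' : (2 * ((3 * wu P + 3 * wv P ^ 2 - ((3 * wv P + 1) / 2) ^ 2) / 2) * ((a + wv P ^ 3 + 6 * wu P * wv P - 2 * ((3 * wv P + 1) / 2) * ((3 * wu P + 3 * wv P ^ 2 - ((3 * wv P + 1) / 2) ^ 2) / 2)) / 2) - 3 * wu P ^ 2 * wv P - c) = 0 := hL0
  constructor
  · show eval (wv P) (wR a b c) = 0
    simp only [wR, eval_add, eval_mul, eval_pow, eval_C, eval_X]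
    linear_combination ((-720)*(wu P)*(wv P)^3 + (-5040)*(wu P)*(wv P)^2 + (-288)*(wu P)*(wv P)*a + (-9360)*(wu P)*(wv P) + (-864)*(wu P)*a + (-2160)*(wu P) + (120)*(wv P)^5 + (-240)*(wv P)^4 + (-72)*(wv P)^3*a + (-1080)*(wv P)^3 + (120)*(wv P)^2*a + (192)*(wv P)^2*b + (4440)*(wv P)^2 + (3144)*(wv P)*a + (1152)*(wv P)*b + (-192)*(wv P)*c + (2112)*(wv P) + (576)*a^2 + (648)*a + (1728)*b + (-576)*c + (216)) * hfe + ((-960)*(wu P)*(wv P)^2 + (-3840)*(wu P)*(wv P) + (-384)*(wu P)*a + (-960)*(wu P) + (160)*(wv P)^4 + (-5600)*(wv P)^3 + (-96)*(wv P)^2*a + (-23040)*(wv P)^2 + (-3392)*(wv P)*a + (256)*(wv P)*b + (-11360)*(wv P) + (-992)*a + (768)*b + (-256)*c + (-1504)) * hL0'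
  · show eval (wu P) (wQ a b (wv P)) = 0
    simp only [wQ, eval_add, eval_mul, eval_pow, eval_C, eval_X]
    linear_combination hfe

lemma wphi_inj (a c d : ℚ) (P Q : ℚ × ℚ)
    (hLP : wL a c (wu P) (wv P) ≠ 0)
    (h : wphi a c d P = wphi a c d Q) : P = Q := by
  have h3 : (wphi a c d P).2.2 = (wphi a c d Q).2.2 := by rw [h]
  have h2 : (wphi a c d P).2.1 = (wphi a c d Q).2.1 := by rw [h]
  simp only [wphi] at h3 h2
  have e0 := congrArg (eval (0 : ℚ)) h3
  have e1 := congrArg (eval (1 : ℚ)) h3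
  simp only [wz, eval_add, eval_mul, eval_C, eval_X, mul_zero, zero_add, mul_one] at e0 e1
  have hlam : (wL a c (wu P) (wv P))⁻¹ = (wL a c (wu Q) (wv Q))⁻¹ := by
    linear_combination e1 - e0
  have f0 := congrArg (eval (0 : ℚ)) h2
  have f1 := congrArg (eval (1 : ℚ)) h2
  simp only [wz, eval_add, eval_mul, eval_pow, eval_C, eval_X, mul_zero, zero_add,
    mul_one] at f0 f1
  rw [← e0] at f0
  rw [← e0, ← hlam] at f1
  have hlamne : (wL a c (wu P) (wv P))⁻¹ ≠ 0 := inv_ne_zero hLP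
  have hv : wv P = wv Q := by
    apply mul_right_cancel₀ hlamne
    linear_combination f1 - f0
  have hu : wu P = wu Q := by
    linear_combination f0 - wmu a c d (wu P) (wv P) * hv
  have h1 : P.1 = Q.1 := by
    have hv' := hv
    simp only [wv] at hv'
    linarith
  have h2' : P.2 = Q.2 := by
    have hu' := hu
    simp only [wu, wv] at hu'
    rw [h1] at hu'
    linarith
  exact Prod.ext h1 h2'

end Stmt2Aux

/-- If the rational points on the curve `Y² = X³ + 135(2a−15)X − 1350(5a+2b−26)` are
infinite, then the set of `ℚ[t]`-points of the surface `x² − y³ − f(z) = t`, where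
`f(z) = z⁵ + az³ + bz² + cz + d`, is infinite. -/
theorem stmt_2 (a b c d : ℤ)
    (hinf : {p : ℚ × ℚ |
        p.2 ^ 2 = p.1 ^ 3 + 135 * (2 * (a : ℚ) - 15) * p.1
          - 1350 * (5 * (a : ℚ) + 2 * (b : ℚ) - 26)}.Infinite) :
    {p : Polynomial ℚ × Polynomial ℚ × Polynomial ℚ |
      p.1 ^ 2 - p.2.1 ^ 3
        - (p.2.2 ^ 5 + Polynomial.C (a : ℚ) * p.2.2 ^ 3 + Polynomial.C (b : ℚ) * p.2.2 ^ 2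
            + Polynomial.C (c : ℚ) * p.2.2 + Polynomial.C (d : ℚ)) = Polynomial.X}.Infinite := by
  classical
  set T : Set (ℚ × ℚ) := {p : ℚ × ℚ |
      p.2 ^ 2 = p.1 ^ 3 + 135 * (2 * (a : ℚ) - 15) * p.1
        - 1350 * (5 * (a : ℚ) + 2 * (b : ℚ) - 26)} with hTdef
  set bad : Set (ℚ × ℚ) := {p : ℚ × ℚ |
      p ∈ T ∧ Stmt2Aux.wL (a : ℚ) (c : ℚ) (Stmt2Aux.wu p) (Stmt2Aux.wv p) = 0} with hbaddef
  have hbadfin : bad.Finite := by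
    have hsub : bad ⊆ (fun p : ℚ × ℚ => (Stmt2Aux.wv p, Stmt2Aux.wu p)) ⁻¹'
        (⋃ v0 ∈ {x : ℚ | (Stmt2Aux.wR (a : ℚ) (b : ℚ) (c : ℚ)).IsRoot x},
          (fun y => (v0, y)) '' {y : ℚ | (Stmt2Aux.wQ (a : ℚ) (b : ℚ) v0).IsRoot y}) := by
      rintro p ⟨hpT, hp0⟩
      have hroots := Stmt2Aux.wbad_root (a : ℚ) (b : ℚ) (c : ℚ) p hpT hp0
      simp only [Set.mem_preimage, Set.mem_iUnion, Set.mem_image, Set.mem_setOf_eq]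
      exact ⟨Stmt2Aux.wv p, hroots.1, Stmt2Aux.wu p, hroots.2, rfl⟩
    refine Set.Finite.subset (Set.Finite.preimage ?_ ?_) hsub
    · apply Function.Injective.injOn
      intro p q hpq
      rw [Prod.mk.injEq] at hpq
      obtain ⟨h1, h2⟩ := hpq
      simp only [Stmt2Aux.wv, Stmt2Aux.wu] at h1 h2
      have e1 : p.1 = q.1 := by linarith
      have e2 : p.2 = q.2 := by
        rw [e1] at h2
        linarith
      exact Prod.ext e1 e2
    · exact Set.Finite.biUnion
        (Polynomial.finite_setOf_isRoot (Stmt2Aux.wR_ne (a : ℚ) (b : ℚ) (c : ℚ)))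
        (fun v0 _ => (Polynomial.finite_setOf_isRoot (Stmt2Aux.wQ_ne (a : ℚ) (b : ℚ) v0)).image _)
  have hgood : (T \ bad).Infinite := hinf.diff hbadfin
  have hinj : Set.InjOn (Stmt2Aux.wphi (a : ℚ) (c : ℚ) (d : ℚ)) (T \ bad) := by
    intro p hp q _ h
    have hpL : Stmt2Aux.wL (a : ℚ) (c : ℚ) (Stmt2Aux.wu p) (Stmt2Aux.wv p) ≠ 0 :=
      fun h0 => hp.2 ⟨hp.1, h0⟩
    exact Stmt2Aux.wphi_inj (a : ℚ) (c : ℚ) (d : ℚ) p q hpL h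
  refine Set.Infinite.mono ?_ (Set.Infinite.image hinj hgood)
  rintro _ ⟨p, hp, rfl⟩
  have hpL : Stmt2Aux.wL (a : ℚ) (c : ℚ) (Stmt2Aux.wu p) (Stmt2Aux.wv p) ≠ 0 :=
    fun h0 => hp.2 ⟨hp.1, h0⟩
  exact Stmt2Aux.wphi_mem (a : ℚ) (b : ℚ) (c : ℚ) (d : ℚ) p hp.1 hpL
end

section
/- Let 𝔽₄ be the field with four elements. Let L be a binary form of degree 1, and G₃, G₄, G₆ binary forms of degrees 3, 4, 6 respectively, all over 𝔽₄. Then there exist two solutions (x,y,z,w), (x',y',z',w') ∈ 𝔽₄⁴ ∖ {0} of the equation w² + w·z·L(x,y) + w·G₃(x,y) + z³ + G₄(x,y)·z + G₆(x,y) = 0 that are not (1,1,2,3)-equivalent. -/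
open MvPolynomial


section helpers

variable {K : Type*} [Field K] [Fintype K]

lemma my_two_eq_zero (hK : Fintype.card K = 4) : (2 : K) = 0 := by
  have h4 : ((4 : ℕ) : K) = 0 := by rw [← hK]; exact FiniteField.cast_card_eq_zero K
  have : (2 : K) ^ 2 = 0 := by push_cast at h4; linear_combination h4
  exact pow_eq_zero_iff (by norm_num) |>.mp this

lemma my_pow4 (hK : Fintype.card K = 4) (x : K) : x ^ 4 = x := by
  rw [← hK]; exact FiniteField.pow_card x

lemma my_pow3 (hK : Fintype.card K = 4) {x : K} (hx : x ≠ 0) : x ^ 3 = 1 := by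
  have := FiniteField.pow_card_sub_one_eq_one x hx
  rwa [hK] at this

/-- quadratic helper: if x ∉ {0,1} then x² + x + 1 = 0 -/
lemma my_quad (hK : Fintype.card K = 4) {x : K} (hx0 : x ≠ 0) (hx1 : x ≠ 1) :
    x ^ 2 + x + 1 = 0 := by
  have h2 := my_two_eq_zero hK
  have h3 := my_pow3 hK hx0
  have hfac : (x + 1) * (x ^ 2 + x + 1) = 0 := by
    linear_combination h3 + (x ^ 2 + x + 1) * h2
  rcases mul_eq_zero.mp hfac with h | h
  · exact absurd (by linear_combination h - h2) hx1
  · exact h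

/-- with β = z a + b = 0, take w = γ². -/
lemma my_helper1 (hK : Fintype.card K = 4) (z a b c d : K) (hzb : z * a = b) :
    ((z^3 + c*z + d)^2)^2 + (z^3 + c*z + d)^2 * z * a + (z^3 + c*z + d)^2 * b
      + z^3 + c*z + d = 0 := by
  have h2 := my_two_eq_zero hK
  linear_combination my_pow4 hK (z^3 + c*z + d) + (z^3 + c*z + d)^2 * hzb
    + ((z^3 + c*z + d)^2 * b + (z^3 + c*z + d)) * h2

/-- key per-point lemma: if the fiber equation has no solution, then b = 1 -/
lemma my_perpoint (hK : Fintype.card K = 4) (a b c d : K)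
    (h : ∀ z w : K, w ^ 2 + w * z * a + w * b + z ^ 3 + c * z + d ≠ 0) : b = 1 := by
  have h2 := my_two_eq_zero hK
  -- a = 0
  have ha : a = 0 := by
    by_contra ha
    refine h (b * a⁻¹) (((b * a⁻¹)^3 + c*(b * a⁻¹) + d)^2) ?_
    have hzb : (b * a⁻¹) * a = b := by field_simp
    linear_combination my_helper1 hK (b * a⁻¹) a b c d hzb
  -- b ≠ 0
  have hb0 : b ≠ 0 := by
    intro hb
    refine h 0 ((0^3 + c*0 + d)^2) ?_
    have hzb : (0 : K) * a = b := by rw [hb, zero_mul]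
    linear_combination my_helper1 hK 0 a b c d hzb
  -- d = 0 is impossible
  have hd0 : d ≠ 0 := by
    intro hd
    exact h 0 0 (by rw [hd]; ring)
  -- c = 0
  have hc : c = 0 := by
    by_contra hc
    rcases eq_or_ne d 1 with hd1 | hd1
    · -- z = b²/c, w = b·g  with g²+g+1 = 0
      obtain ⟨g, hg0, hg1⟩ : ∃ g : K, g ≠ 0 ∧ g ≠ 1 := by
        classical
        by_contra hcon
        push_neg at hcon
        have : ({0, 1} : Finset K) = Finset.univ := by
          apply Finset.eq_univ_of_forall
          intro x
          simp only [Finset.mem_insert, Finset.mem_singleton]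
          by_cases hx : x = 0
          · exact Or.inl hx
          · exact Or.inr (hcon x hx)
        have hcard := congrArg Finset.card this
        rw [Finset.card_univ, hK] at hcard
        have : ({0, 1} : Finset K).card ≤ 2 := Finset.card_insert_le _ _ |>.trans (by simp)
        omega
      have hgg := my_quad hK hg0 hg1
      set z : K := b^2 * c⁻¹ with hzdef
      have hz0 : z ≠ 0 := by
        simp only [hzdef]
        exact mul_ne_zero (pow_ne_zero 2 hb0) (inv_ne_zero hc)
      have hz3 : z ^ 3 = 1 := my_pow3 hK hz0
      have hcz : c * z = b ^ 2 := by rw [hzdef]; field_simp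
      refine h z (b * g) ?_
      linear_combination b^2 * hgg + (b*g*z) * ha + hz3 + hcz + hd1 + (1 - b^2*g - b^2) * h2 + (b^2 + b^2*g) * h2
    · -- z = (1+d)/c, w = 0
      have hd1' : (1 : K) + d ≠ 0 := by
        intro hh
        exact hd1 (by linear_combination hh - h2)
      set z : K := (1 + d) * c⁻¹ with hzdef
      have hz0 : z ≠ 0 := mul_ne_zero hd1' (inv_ne_zero hc)
      have hz3 : z ^ 3 = 1 := my_pow3 hK hz0
      have hcz : c * z = 1 + d := by rw [hzdef]; field_simp
      refine h z 0 ?_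
      linear_combination hz3 + hcz + (1 + d) * h2
  -- now a = 0, c = 0, b ≠ 0 : show b = 1
  by_contra hb1
  have hbb := my_quad hK hb0 hb1
  have hb3 := my_pow3 hK hb0
  have hb4 := my_pow4 hK b
  -- d ∈ {0, 1, b, b+1}; d = 0 excluded
  have hd3 := my_pow3 hK hd0
  have hfac : (d + 1) * (d ^ 2 + d + 1) = 0 := by
    linear_combination hd3 + (d ^ 2 + d + 1) * h2
  rcases mul_eq_zero.mp hfac with hd | hdd
  · -- d = 1 : z = 1, w = 0
    have hd1 : d = 1 := by linear_combination hd - h2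
    exact h 1 0 (by linear_combination hc + hd1 + h2)
  · have hfac2 : (d + b) * (d + b + 1) = 0 := by
      linear_combination hdd + hbb + (d * b - 1) * h2
    rcases mul_eq_zero.mp hfac2 with hd | hd
    · -- d = b : z = 1, w = b²
      have hdb : d = b := by linear_combination hd - b * h2
      exact h 1 (b^2) (by
        linear_combination hb4 + hb3 + b^2 * ha + hc + hdb + (b + 1) * h2)
    · -- d = b + 1 : z = 0, w = b²
      have hdb : d = b + 1 := by linear_combination hd - (b + 1) * h2
      exact h 0 (b^2) (by
        linear_combination hb4 + hb3 + hdb + (b + 1) * h2)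





lemma my_degree_two {m : Fin 2 →₀ ℕ} : m.degree = m 0 + m 1 := by
  rw [Finsupp.degree, ← Fin.sum_univ_two (f := fun i => m i)]
  exact Finset.sum_subset (Finset.subset_univ _)
    (fun i _ hi => Finsupp.notMem_support_iff.mp hi)

lemma my_support_deg {G : MvPolynomial (Fin 2) K} {n : ℕ} (hG : G.IsHomogeneous n)
    {m : Fin 2 →₀ ℕ} (hm : m ∈ G.support) : m 0 + m 1 = n := by
  rw [← my_degree_two]
  by_contra hne
  exact mem_support_iff.mp hm (hG.coeff_eq_zero hne)

lemma my_eval00 {G : MvPolynomial (Fin 2) K} {n : ℕ} (hG : G.IsHomogeneous n)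
    (hn : n ≠ 0) : eval ![(0 : K), 0] G = 0 := by
  rw [eval_eq']
  apply Finset.sum_eq_zero
  intro m hm
  have hd := my_support_deg hG hm
  rw [Fin.prod_univ_two]
  have : m 0 ≠ 0 ∨ m 1 ≠ 0 := by omega
  rcases this with h | h
  · simp [Matrix.cons_val_zero, zero_pow h]
  · simp [Matrix.cons_val_one, zero_pow h]

lemma my_sum3 (hK : Fintype.card K = 4) {G : MvPolynomial (Fin 2) K}
    (hG : G.IsHomogeneous 3) : ∑ p : K × K, eval ![p.1, p.2] G = 0 := by
  have key : ∀ p : K × K, eval ![p.1, p.2] G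
      = ∑ m ∈ G.support, coeff m G * (p.1 ^ m 0 * p.2 ^ m 1) := by
    intro p
    rw [eval_eq']
    refine Finset.sum_congr rfl fun m _ => ?_
    rw [Fin.prod_univ_two]
    simp
  simp_rw [key]
  rw [Finset.sum_comm]
  apply Finset.sum_eq_zero
  intro m hm
  have hd := my_support_deg hG hm
  have split : ∑ p : K × K, coeff m G * (p.1 ^ m 0 * p.2 ^ m 1)
      = coeff m G * ((∑ x : K, x ^ m 0) * (∑ y : K, y ^ m 1)) := by
    rw [← Finset.mul_sum]
    congr 1
    rw [Fintype.sum_prod_type, Finset.sum_mul_sum]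
  rw [split]
  have h31 : (3 : ℕ) < Fintype.card K - 1 + 1 := by omega
  rcases lt_or_ge (m 0) 3 with h0 | h0
  · have : (∑ x : K, x ^ m 0) = 0 :=
      FiniteField.sum_pow_lt_card_sub_one K (m 0) (by omega)
    rw [this, zero_mul, mul_zero]
  · have h1 : m 1 < Fintype.card K - 1 := by omega
    have : (∑ y : K, y ^ m 1) = 0 :=
      FiniteField.sum_pow_lt_card_sub_one K (m 1) h1
    rw [this, mul_zero, mul_zero]


end helpers

/-- Every del Pezzo surface of degree 1 over the field `𝔽₄` with four elements, given in
`ℙ(1,1,2,3)` by `w² + w·z·L(x,y) + w·G₃(x,y) + z³ + G₄(x,y)·z + G₆(x,y) = 0` with binary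
forms `L, G₃, G₄, G₆` of degrees 1, 3, 4, 6, has two nonzero solutions in `𝔽₄⁴` that
are not `(1,1,2,3)`-equivalent, i.e. the surface has at least two rational points. -/
theorem stmt_7 (K : Type*) [Field K] [Fintype K] (hK : Fintype.card K = 4)
    (L G₃ G₄ G₆ : MvPolynomial (Fin 2) K)
    (hL : L.IsHomogeneous 1) (hG₃ : G₃.IsHomogeneous 3)
    (hG₄ : G₄.IsHomogeneous 4) (hG₆ : G₆.IsHomogeneous 6) :
    ∃ x y z w x' y' z' w' : K,
      (x, y, z, w) ≠ (0, 0, 0, 0) ∧ (x', y', z', w') ≠ (0, 0, 0, 0) ∧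
      w ^ 2 + w * z * eval ![x, y] L + w * eval ![x, y] G₃ + z ^ 3
        + eval ![x, y] G₄ * z + eval ![x, y] G₆ = 0 ∧
      w' ^ 2 + w' * z' * eval ![x', y'] L + w' * eval ![x', y'] G₃ + z' ^ 3
        + eval ![x', y'] G₄ * z' + eval ![x', y'] G₆ = 0 ∧
      ¬∃ l : K, l ≠ 0 ∧ x' = l * x ∧ y' = l * y ∧ z' = l ^ 2 * z ∧ w' = l ^ 3 * w := by
  classical
  have h2 : (2 : K) = 0 := my_two_eq_zero hK
  -- second solution with (x,y) ≠ 0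
  have key : ∃ x y z w : K, (x, y) ≠ ((0 : K), (0 : K)) ∧
      w ^ 2 + w * z * eval ![x, y] L + w * eval ![x, y] G₃ + z ^ 3
        + eval ![x, y] G₄ * z + eval ![x, y] G₆ = 0 := by
    by_contra hcon
    push_neg at hcon
    have hval : ∀ x y : K, (x, y) ≠ ((0 : K), (0 : K)) → eval ![x, y] G₃ = 1 := by
      intro x y hxy
      refine my_perpoint hK (eval ![x, y] L) _ (eval ![x, y] G₄) (eval ![x, y] G₆) ?_
      intro z w
      exact hcon x y z w hxy
    have hs := my_sum3 hK hG₃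
    rw [← Finset.add_sum_erase _ _ (Finset.mem_univ ((0 : K), (0 : K)))] at hs
    have h00 : eval ![((0 : K), (0 : K)).1, ((0 : K), (0 : K)).2] G₃ = 0 :=
      my_eval00 hG₃ (by norm_num)
    rw [h00, zero_add] at hs
    have hrest : ∑ p ∈ (Finset.univ.erase ((0 : K), (0 : K))),
        eval ![p.1, p.2] G₃ = ∑ p ∈ (Finset.univ.erase ((0 : K), (0 : K))), (1 : K) := by
      refine Finset.sum_congr rfl fun p hp => ?_
      exact hval p.1 p.2 (by
        intro hh
        have : p = ((0:K),(0:K)) := Prod.ext (congrArg Prod.fst hh) (congrArg Prod.snd hh)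
        exact (Finset.mem_erase.mp hp).1 this)
    rw [hrest, Finset.sum_const, Finset.card_erase_of_mem (Finset.mem_univ _),
      Finset.card_univ, Fintype.card_prod, hK] at hs
    norm_num at hs
    -- hs : (15 : K) • 1 = 0 or similar
    have h15 : (15 : K) = 1 := by linear_combination 7 * h2
    rw [h15] at hs
    exact one_ne_zero hs
  obtain ⟨x0, y0, z0, w0, hxy0, heq0⟩ := key
  refine ⟨0, 0, 1, 1, x0, y0, z0, w0, by simp, ?_, ?_, heq0, ?_⟩
  · intro hh
    apply hxy0
    simp only [Prod.mk.injEq] at hh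
    exact Prod.ext hh.1 hh.2.1
  · rw [my_eval00 hL (by norm_num), my_eval00 hG₃ (by norm_num),
      my_eval00 hG₄ (by norm_num), my_eval00 hG₆ (by norm_num)]
    linear_combination h2
  · rintro ⟨l, hl, hx, hy, -, -⟩
    apply hxy0
    rw [mul_zero] at hx hy
    exact Prod.ext hx hy
end

section
/- Let 𝔽_q be a finite field whose characteristic is different from 2 and 3, with q ≥ 5 elements. Let G₄ and G₆ be binary forms of degrees 4 and 6 over 𝔽_q, and suppose there exists (u,v) ∈ 𝔽_q² ∖ {(0,0)} such that 4·G₄(u,v)³ + 27·G₆(u,v)² ≠ 0. Then there exist two solutions (x,y,z,w), (x',y',z',w') ∈ 𝔽_q⁴ ∖ {0} of the equation w² + z³ + G₄(x,y)·z + G₆(x,y) = 0 that are not (1,1,2,3)-equivalent. -/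
open Polynomial in
lemma key_cubic (F : Type*) [Field F] [Fintype F]
    (h2 : ringChar F ≠ 2) (hq : 5 ≤ Fintype.card F) (a b : F) :
    ∃ z w : F, w ^ 2 + z ^ 3 + a * z + b = 0 := by
  by_contra h
  push_neg at h
  set q := Fintype.card F with hqdef
  have hodd : q % 2 = 1 := FiniteField.odd_card_of_char_ne_two h2
  set e := q / 2 with hedef
  have hq2e : q = 2 * e + 1 := by omega
  have he2 : 2 ≤ e := by omega
  -- every value -(z³+az+b) is a nonsquare
  set f : F[X] := X ^ 3 + C a * X + C b with hfdef
  have hfeval : ∀ z : F, f.eval z = z ^ 3 + a * z + b := by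
    intro z; simp [hfdef]
  have hns : ∀ z : F, (-(f.eval z)) ^ e = -1 := by
    intro z
    have hne : -(f.eval z) ≠ 0 := by
      intro h0
      have : (0 : F) ^ 2 + z ^ 3 + a * z + b = 0 := by
        rw [hfeval z] at h0
        linear_combination -h0
      exact h z 0 this
    rcases FiniteField.pow_dichotomy h2 hne with h1 | h1
    · exfalso
      have hsq : IsSquare (-(f.eval z)) := (FiniteField.isSquare_iff h2 hne).mpr h1
      obtain ⟨w, hw⟩ := hsq
      apply h z w
      rw [hfeval z] at hw
      linear_combination -hw
    · exact h1
  -- the polynomial P = (-f)^e + 1 vanishes on all of F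
  set P : F[X] := (-f) ^ e + 1 with hPdef
  have hPeval : ∀ z : F, P.eval z = 0 := by
    intro z
    simp only [hPdef, eval_add, eval_pow, eval_neg, eval_one]
    rw [hns z]; ring
  have hfmonic : f.Monic := by
    rw [hfdef]; monicity!
  have hfdeg : f.natDegree = 3 := by
    rw [hfdef]; compute_degree!
  have hfne : f ≠ 0 := hfmonic.ne_zero
  have hPdeg : P.natDegree = 3 * e := by
    have h1 : ((-f) ^ e).natDegree = 3 * e := by
      rw [natDegree_pow, natDegree_neg, hfdeg]; ring
    calc P.natDegree = ((-f) ^ e + C 1).natDegree := by rw [hPdef, map_one]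
      _ = ((-f) ^ e).natDegree := natDegree_add_C
      _ = 3 * e := h1
  have hPne : P ≠ 0 := by
    intro h0
    rw [h0, natDegree_zero] at hPdeg
    omega
  have h1q : 1 < q := by omega
  -- X^q - X divides P
  have hle : Finset.univ.val ≤ P.roots := by
    rw [Multiset.le_iff_subset Finset.univ.nodup]
    intro x _
    rw [mem_roots hPne]
    exact hPeval x
  have hDdvd : ((Finset.univ.val.map fun c : F => X - C c).prod) ∣ P :=
    (Multiset.prod_X_sub_C_dvd_iff_le_roots hPne _).mpr hle
  have hXqne : (X ^ q - X : F[X]) ≠ 0 := FiniteField.X_pow_card_sub_X_ne_zero F h1q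
  have hXqdeg : (X ^ q - X : F[X]).natDegree = q :=
    FiniteField.X_pow_card_sub_X_natDegree_eq F h1q
  have hDdvdX : ((Finset.univ.val.map fun c : F => X - C c).prod) ∣ (X ^ q - X : F[X]) := by
    rw [Multiset.prod_X_sub_C_dvd_iff_le_roots hXqne, FiniteField.roots_X_pow_card_sub_X]
  have hDmonic : ((Finset.univ.val.map fun c : F => X - C c).prod).Monic :=
    monic_multiset_prod_of_monic _ _ (fun c _ => monic_X_sub_C c)
  have hDdeg : ((Finset.univ.val.map fun c : F => X - C c).prod).natDegree = q := by
    have hmon : ∀ p ∈ (Finset.univ.val.map fun c : F => X - C c), p.Monic := by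
      intro p hp
      obtain ⟨c, _, rfl⟩ := Multiset.mem_map.mp hp
      exact monic_X_sub_C c
    rw [natDegree_multiset_prod_of_monic _ hmon]
    rw [Multiset.map_map]
    have : (Multiset.map (natDegree ∘ fun c : F => X - C c) Finset.univ.val) =
        Multiset.map (fun _ : F => 1) Finset.univ.val := by
      apply Multiset.map_congr rfl
      intro c _
      simp [natDegree_X_sub_C]
    rw [this, Multiset.map_const', Multiset.sum_replicate, smul_eq_mul, mul_one]
    rfl
  have hXqmonic : (X ^ q - X : F[X]).Monic := by
    apply (monic_X_pow q).sub_of_left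
    rw [degree_X, degree_X_pow]
    exact_mod_cast h1q
  have hDeq : (X ^ q - X : F[X]) = (Finset.univ.val.map fun c : F => X - C c).prod := by
    apply eq_of_monic_of_dvd_of_natDegree_le hDmonic hXqmonic hDdvdX
    omega
  have hdvd : (X ^ q - X : F[X]) ∣ P := by rw [hDeq]; exact hDdvd
  obtain ⟨Q, hPQ⟩ := hdvd
  have hQne : Q ≠ 0 := by
    rintro rfl
    rw [mul_zero] at hPQ
    exact hPne hPQ
  have hQdeg : Q.natDegree = e - 1 := by
    have := hPdeg
    rw [hPQ, natDegree_mul hXqne hQne, hXqdeg] at this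
    omega
  -- the pointwise identity Q(z) f(z) = e f'(z)
  set e' := e - 1 with he'def
  have he' : e = e' + 1 := by omega
  have hd1 : Polynomial.derivative P = C ((e:ℕ):F) * (-f) ^ (e - 1) * (-Polynomial.derivative f) := by
    rw [hPdef]
    rw [derivative_add, derivative_one, add_zero, derivative_pow, derivative_neg]
  have hdXq : Polynomial.derivative (X ^ q - X : F[X]) = -1 := by
    rw [derivative_sub, derivative_X_pow, derivative_X]
    have : ((q:ℕ):F) = 0 := by rw [hqdef]; exact FiniteField.cast_card_eq_zero F
    rw [this]
    simp
  have hd2 : Polynomial.derivative P =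
      -Q + (X ^ q - X) * Polynomial.derivative Q := by
    rw [hPQ, derivative_mul, hdXq]
    ring
  have hkey : ∀ z : F, Q.eval z * f.eval z = ((e:ℕ):F) * (Polynomial.derivative f).eval z := by
    intro z
    have hz1 : (Polynomial.derivative P).eval z = -Q.eval z := by
      rw [hd2]
      simp only [eval_add, eval_neg, eval_mul, eval_sub, eval_pow, eval_X]
      rw [FiniteField.pow_card]
      ring
    have hz2 : (Polynomial.derivative P).eval z =
        ((e:ℕ):F) * (-(f.eval z)) ^ e' * (-(Polynomial.derivative f).eval z) := by
      rw [hd1]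
      simp only [eval_mul, eval_C, eval_pow, eval_neg, he'def]
    have B : -Q.eval z = ((e:ℕ):F) * (-(f.eval z)) ^ e' * (-(Polynomial.derivative f).eval z) := by
      rw [← hz1, hz2]
    have hA : (-(f.eval z)) ^ e' * (-(f.eval z)) = -1 := by
      rw [← pow_succ, ← he']
      exact hns z
    linear_combination (-(f.eval z)) * B + (-((e:ℕ):F) * (Polynomial.derivative f).eval z) * hA
  set R : F[X] := Q * f - C ((e:ℕ):F) * Polynomial.derivative f with hRdef
  have hReval : ∀ z : F, R.eval z = 0 := by
    intro z
    rw [hRdef]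
    simp only [eval_sub, eval_mul, eval_C]
    rw [hkey z]
    ring
  have hQf : (Q * f).natDegree = e + 2 := by
    rw [natDegree_mul hQne hfne, hQdeg, hfdeg]
    omega
  have hCf' : (C ((e:ℕ):F) * Polynomial.derivative f).natDegree ≤ 2 := by
    apply le_trans (natDegree_C_mul_le _ _)
    apply le_trans (natDegree_derivative_le f)
    omega
  have hRdeg : R.natDegree < q := by
    apply lt_of_le_of_lt (natDegree_sub_le _ _)
    rw [hQf]
    omega
  have hR0 : R = 0 := by
    apply eq_zero_of_natDegree_lt_card_of_eval_eq_zero' R Finset.univ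
      (fun z _ => hReval z)
    rwa [Finset.card_univ]
  have hfin : Q * f = C ((e:ℕ):F) * Polynomial.derivative f := by
    have := hR0
    rw [hRdef, sub_eq_zero] at this
    exact this
  have : (Q * f).natDegree ≤ 2 := hfin ▸ hCf'
  omega



open MvPolynomial

lemma eval_zero_of_homogeneous {F : Type*} [Field F] {n : ℕ} (hn : n ≠ 0)
    {G : MvPolynomial (Fin 2) F} (hG : G.IsHomogeneous n) :
    eval ![(0:F), 0] G = 0 := by
  have h00 : (![(0:F), 0] : Fin 2 → F) = 0 := by
    funext i; fin_cases i <;> rfl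
  rw [h00]
  have := DFunLike.congr_fun MvPolynomial.eval_zero G
  rw [this]
  have : constantCoeff G = coeff 0 G := rfl
  rw [this]
  apply hG.coeff_eq_zero
  simpa using hn.symm

/-- Let `𝔽_q` be a finite field of characteristic `≠ 2, 3` with `q ≥ 5` elements, and let
`G₄, G₆` be binary forms of degrees 4 and 6 such that `4·G₄(u,v)³ + 27·G₆(u,v)² ≠ 0` for
some `(u,v) ≠ (0,0)` (a smooth fiber of the anticanonical fibration exists). Then the
del Pezzo surface of degree 1 `w² + z³ + G₄(x,y)·z + G₆(x,y) = 0` in `ℙ(1,1,2,3)` has two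
nonzero solutions in `𝔽_q⁴` that are not `(1,1,2,3)`-equivalent, i.e. at least two
rational points. -/
theorem stmt_9 (F : Type*) [Field F] [Fintype F]
    (hchar2 : ringChar F ≠ 2) (hchar3 : ringChar F ≠ 3) (hq : 5 ≤ Fintype.card F)
    (G₄ G₆ : MvPolynomial (Fin 2) F)
    (hG₄ : G₄.IsHomogeneous 4) (hG₆ : G₆.IsHomogeneous 6)
    (hsm : ∃ u v : F, ¬(u = 0 ∧ v = 0) ∧
        4 * eval ![u, v] G₄ ^ 3 + 27 * eval ![u, v] G₆ ^ 2 ≠ 0) :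
    ∃ x y z w x' y' z' w' : F,
      (x, y, z, w) ≠ (0, 0, 0, 0) ∧ (x', y', z', w') ≠ (0, 0, 0, 0) ∧
      w ^ 2 + z ^ 3 + eval ![x, y] G₄ * z + eval ![x, y] G₆ = 0 ∧
      w' ^ 2 + z' ^ 3 + eval ![x', y'] G₄ * z' + eval ![x', y'] G₆ = 0 ∧
      ¬∃ l : F, l ≠ 0 ∧ x' = l * x ∧ y' = l * y ∧ z' = l ^ 2 * z ∧ w' = l ^ 3 * w := by
  obtain ⟨z, w, hzw⟩ := key_cubic F hchar2 hq (eval ![1, 0] G₄) (eval ![1, 0] G₆)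
  refine ⟨0, 0, -1, 1, 1, 0, z, w, ?_, ?_, ?_, hzw, ?_⟩
  · simp
  · simp
  · rw [eval_zero_of_homogeneous (by norm_num) hG₄,
      eval_zero_of_homogeneous (by norm_num) hG₆]
    ring
  · rintro ⟨l, hl, hx, -, -, -⟩
    rw [mul_zero] at hx
    exact one_ne_zero hx
end

section
/- Let k be a finite field of characteristic 2, and let G₂ and G₄ be ternary forms of degrees 2 and 4 over k. Let C be the set of equivalence classes of triples (x,y,z) ∈ k³ ∖ {0} with G₂(x,y,z) = 0, under the equivalence (x,y,z) ∼ (λx, λy, λz) for λ ∈ k ∖ {0}, and let X be the set of (1,1,1,2)-equivalence classes of quadruples (x,y,z,w) ∈ k⁴ ∖ {0} with w² + w·G₂(x,y,z) + G₄(x,y,z) = 0. Then there exists an injective map from C into X; in particular the number of k-points of the surface is at least the number of k-points of the conic G₂ = 0 in ℙ². -/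
open MvPolynomial

/-- The `k`-points of the conic `G₂ = 0` in `ℙ²`: equivalence classes of nonzero triples
`(x,y,z) ∈ k³` with `G₂(x,y,z) = 0`, modulo scaling `(x,y,z) ∼ (λx, λy, λz)`, `λ ≠ 0`. -/
def ConicPoints (k : Type*) [Field k] (G₂ : MvPolynomial (Fin 3) k) : Type _ :=
  Quot (fun p q : {v : k × k × k // v ≠ 0 ∧ eval ![v.1, v.2.1, v.2.2] G₂ = 0} =>
    ∃ l : k, l ≠ 0 ∧ q.1 = (l * p.1.1, l * p.1.2.1, l * p.1.2.2))

/-- The `k`-points of the degree-2 del Pezzo surface `w² + w·G₂ + G₄ = 0` in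
`ℙ(1,1,1,2)`: `(1,1,1,2)`-equivalence classes of nonzero quadruples `(x,y,z,w) ∈ k⁴`
satisfying the equation, where `(x,y,z,w) ∼ (λx, λy, λz, λ²w)` for `λ ≠ 0`. -/
def SurfacePoints (k : Type*) [Field k] (G₂ G₄ : MvPolynomial (Fin 3) k) : Type _ :=
  Quot (fun p q : {v : k × k × k × k // v ≠ 0 ∧
      v.2.2.2 ^ 2 + v.2.2.2 * eval ![v.1, v.2.1, v.2.2.1] G₂
        + eval ![v.1, v.2.1, v.2.2.1] G₄ = 0} =>
    ∃ l : k, l ≠ 0 ∧ q.1 = (l * p.1.1, l * p.1.2.1, l * p.1.2.2.1, l ^ 2 * p.1.2.2.2))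

lemma eval_mul_scal {k : Type*} [Field k] {n : ℕ} {φ : MvPolynomial (Fin 3) k}
    (h : φ.IsHomogeneous n) (l : k) (v : Fin 3 → k) :
    eval (fun i => l * v i) φ = l ^ n * eval v φ := by
  rw [eval_eq', eval_eq', Finset.mul_sum]
  apply Finset.sum_congr rfl
  intro d hd
  have hdeg : d.degree = n := by
    by_contra hne
    exact (MvPolynomial.mem_support_iff.mp hd) (h.coeff_eq_zero hne)
  have : ∏ i, (l * v i) ^ d i = (∏ i, l ^ d i) * ∏ i, v i ^ d i := by
    rw [← Finset.prod_mul_distrib]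
    exact Finset.prod_congr rfl fun i _ => mul_pow _ _ _
  rw [this, Finset.prod_pow_eq_pow_sum]
  have hsum : ∑ i, d i = n := by
    rw [← hdeg, Finsupp.degree]
    exact (Finset.sum_subset (Finset.subset_univ _) (fun i _ hi => by
      simpa using Finsupp.notMem_support_iff.mp hi)).symm
  rw [hsum]; ring


/-- Let `k` be a finite field of characteristic 2, `G₂, G₄` ternary forms of degrees 2
and 4 over `k`. There is an injection from the `k`-points of the conic `G₂ = 0` in `ℙ²`
into the `k`-points of the degree-2 del Pezzo surface `w² + w·G₂ + G₄ = 0` in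
`ℙ(1,1,1,2)`; in particular the number of `k`-points of the surface is at least the
number of `k`-points of the conic. -/
theorem stmt_13 (k : Type*) [Field k] [Fintype k] (hchar : ringChar k = 2)
    (G₂ G₄ : MvPolynomial (Fin 3) k)
    (hG₂ : G₂.IsHomogeneous 2) (hG₄ : G₄.IsHomogeneous 4) :
    (∃ f : ConicPoints k G₂ → SurfacePoints k G₂ G₄, Function.Injective f) ∧
      Nat.card (ConicPoints k G₂) ≤ Nat.card (SurfacePoints k G₂ G₄) := by
  haveI hC2 : CharP k 2 := hchar ▸ ringChar.charP k
  have htwo : (2 : k) = 0 := by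
    have := CharP.cast_eq_zero k 2; exact_mod_cast this
  -- squaring is bijective
  have hsqinj : Function.Injective (fun x : k => x ^ 2) := by
    intro a b hab
    simp only at hab
    have h1 : (a + b) ^ 2 = 0 := by
      rw [add_pow_two, hab]
      have h2 : 2 * a * b = 0 := by rw [mul_assoc, htwo, zero_mul]
      rw [h2, add_zero, CharTwo.add_self_eq_zero]
    have hab0 : a + b = 0 := pow_eq_zero_iff (by norm_num) |>.mp h1
    have := neg_eq_of_add_eq_zero_left hab0
    rw [CharTwo.neg_eq] at this
    exact this.symm
  have hsqsurj : Function.Surjective (fun x : k => x ^ 2) :=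
    Finite.surjective_of_injective hsqinj
  choose sqrt hsqrt' using hsqsurj
  have hsqrt : ∀ b : k, sqrt b ^ 2 = b := hsqrt'
  -- the relations
  set rC := (fun p q : {v : k × k × k // v ≠ 0 ∧ eval ![v.1, v.2.1, v.2.2] G₂ = 0} =>
    ∃ l : k, l ≠ 0 ∧ q.1 = (l * p.1.1, l * p.1.2.1, l * p.1.2.2)) with hrC
  set rS := (fun p q : {v : k × k × k × k // v ≠ 0 ∧
      v.2.2.2 ^ 2 + v.2.2.2 * eval ![v.1, v.2.1, v.2.2.1] G₂
        + eval ![v.1, v.2.1, v.2.2.1] G₄ = 0} =>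
    ∃ l : k, l ≠ 0 ∧ q.1 = (l * p.1.1, l * p.1.2.1, l * p.1.2.2.1, l ^ 2 * p.1.2.2.2)) with hrS
  -- the lift on representatives
  have FF : ∀ p : {v : k × k × k // v ≠ 0 ∧ eval ![v.1, v.2.1, v.2.2] G₂ = 0},
      (p.1.1, p.1.2.1, p.1.2.2, sqrt (eval ![p.1.1, p.1.2.1, p.1.2.2] G₄)) ≠ (0 : k × k × k × k) ∧
      (sqrt (eval ![p.1.1, p.1.2.1, p.1.2.2] G₄)) ^ 2
        + (sqrt (eval ![p.1.1, p.1.2.1, p.1.2.2] G₄)) * eval ![p.1.1, p.1.2.1, p.1.2.2] G₂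
        + eval ![p.1.1, p.1.2.1, p.1.2.2] G₄ = 0 := by
    intro p
    constructor
    · intro h
      apply p.2.1
      rw [Prod.ext_iff, Prod.ext_iff, Prod.ext_iff] at h
      obtain ⟨h1, h2, h3, _⟩ := h
      exact Prod.ext h1 (Prod.ext h2 h3)
    · rw [p.2.2, hsqrt]
      rw [mul_zero, add_zero]
      exact CharTwo.add_self_eq_zero _
  let F : {v : k × k × k // v ≠ 0 ∧ eval ![v.1, v.2.1, v.2.2] G₂ = 0} →
      {v : k × k × k × k // v ≠ 0 ∧
        v.2.2.2 ^ 2 + v.2.2.2 * eval ![v.1, v.2.1, v.2.2.1] G₂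
          + eval ![v.1, v.2.1, v.2.2.1] G₄ = 0} :=
    fun p => ⟨(p.1.1, p.1.2.1, p.1.2.2, sqrt (eval ![p.1.1, p.1.2.1, p.1.2.2] G₄)),
      (FF p).1, (FF p).2⟩
  -- F respects the relations
  have hF : ∀ p q, rC p q → rS (F p) (F q) := by
    rintro p q ⟨l, hl, hq⟩
    refine ⟨l, hl, ?_⟩
    have hx : q.1.1 = l * p.1.1 := by rw [hq]
    have hy : q.1.2.1 = l * p.1.2.1 := by rw [hq]
    have hz : q.1.2.2 = l * p.1.2.2 := by rw [hq]
    have hvec : (![q.1.1, q.1.2.1, q.1.2.2] : Fin 3 → k)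
        = fun i => l * ![p.1.1, p.1.2.1, p.1.2.2] i := by
      funext i
      fin_cases i <;> simp [hx, hy, hz]
    have hw : sqrt (eval ![q.1.1, q.1.2.1, q.1.2.2] G₄)
        = l ^ 2 * sqrt (eval ![p.1.1, p.1.2.1, p.1.2.2] G₄) := by
      apply hsqinj
      simp only
      rw [hsqrt, hvec, eval_mul_scal hG₄, mul_pow, ← pow_mul, hsqrt]
    show (q.1.1, q.1.2.1, q.1.2.2, sqrt (eval ![q.1.1, q.1.2.1, q.1.2.2] G₄)) = _
    exact Prod.ext hx (Prod.ext hy (Prod.ext hz hw))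
  let f : ConicPoints k G₂ → SurfacePoints k G₂ G₄ :=
    Quot.lift (fun p => Quot.mk rS (F p)) (fun p q h => Quot.sound (hF p q h))
  -- rS is an equivalence relation
  have hequiv : Equivalence rS := by
    constructor
    · intro p
      exact ⟨1, one_ne_zero, by simp⟩
    · rintro p q ⟨l, hl, hq⟩
      have h1 : q.1.1 = l * p.1.1 := congrArg (fun v => v.1) hq
      have h2 : q.1.2.1 = l * p.1.2.1 := congrArg (fun v => v.2.1) hq
      have h3 : q.1.2.2.1 = l * p.1.2.2.1 := congrArg (fun v => v.2.2.1) hq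
      have h4 : q.1.2.2.2 = l ^ 2 * p.1.2.2.2 := congrArg (fun v => v.2.2.2) hq
      refine ⟨l⁻¹, inv_ne_zero hl, ?_⟩
      refine Prod.ext ?_ (Prod.ext ?_ (Prod.ext ?_ ?_))
      · show p.1.1 = l⁻¹ * q.1.1
        rw [h1, inv_mul_cancel_left₀ hl]
      · show p.1.2.1 = l⁻¹ * q.1.2.1
        rw [h2, inv_mul_cancel_left₀ hl]
      · show p.1.2.2.1 = l⁻¹ * q.1.2.2.1
        rw [h3, inv_mul_cancel_left₀ hl]
      · show p.1.2.2.2 = (l⁻¹) ^ 2 * q.1.2.2.2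
        rw [h4, ← mul_assoc, ← mul_pow, inv_mul_cancel₀ hl, one_pow, one_mul]
    · rintro p q r ⟨l, hl, hq⟩ ⟨m, hm, hr⟩
      have h1 : q.1.1 = l * p.1.1 := congrArg (fun v => v.1) hq
      have h2 : q.1.2.1 = l * p.1.2.1 := congrArg (fun v => v.2.1) hq
      have h3 : q.1.2.2.1 = l * p.1.2.2.1 := congrArg (fun v => v.2.2.1) hq
      have h4 : q.1.2.2.2 = l ^ 2 * p.1.2.2.2 := congrArg (fun v => v.2.2.2) hq
      have k1 : r.1.1 = m * q.1.1 := congrArg (fun v => v.1) hr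
      have k2 : r.1.2.1 = m * q.1.2.1 := congrArg (fun v => v.2.1) hr
      have k3 : r.1.2.2.1 = m * q.1.2.2.1 := congrArg (fun v => v.2.2.1) hr
      have k4 : r.1.2.2.2 = m ^ 2 * q.1.2.2.2 := congrArg (fun v => v.2.2.2) hr
      refine ⟨m * l, mul_ne_zero hm hl, ?_⟩
      refine Prod.ext ?_ (Prod.ext ?_ (Prod.ext ?_ ?_))
      · show r.1.1 = m * l * p.1.1
        rw [k1, h1]; ring
      · show r.1.2.1 = m * l * p.1.2.1
        rw [k2, h2]; ring
      · show r.1.2.2.1 = m * l * p.1.2.2.1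
        rw [k3, h3]; ring
      · show r.1.2.2.2 = (m * l) ^ 2 * p.1.2.2.2
        rw [k4, h4]; ring
  have hfinj : Function.Injective f := by
    intro a b
    induction a using Quot.ind with | _ p =>
    induction b using Quot.ind with | _ q =>
    intro hab
    have : Quot.mk rS (F p) = Quot.mk rS (F q) := hab
    have hrel : rS (F p) (F q) := (hequiv.eqvGen_iff).mp (Quot.eq.mp this)
    obtain ⟨l, hl, hq⟩ := hrel
    apply Quot.sound
    refine ⟨l, hl, ?_⟩
    have hx : q.1.1 = l * p.1.1 := congrArg (fun v => v.1) hq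
    have hy : q.1.2.1 = l * p.1.2.1 := congrArg (fun v => v.2.1) hq
    have hz : q.1.2.2 = l * p.1.2.2 := congrArg (fun v => v.2.2.1) hq
    exact Prod.ext hx (Prod.ext hy hz)
  refine ⟨⟨f, hfinj⟩, ?_⟩
  haveI : Finite (SurfacePoints k G₂ G₄) :=
    Finite.of_surjective (Quot.mk rS) (fun x => Quot.exists_rep x)
  exact Nat.card_le_card_of_injective f hfinj
end

section
/- There exists a ternary form G₄ of degree 4 over the field 𝔽₂ with two elements such that the equation w² + w·(x² + x·y + y²) + G₄(x,y,z) = 0 has exactly one solution (x,y,z,w) ∈ 𝔽₂⁴ with (x,y,z,w) ≠ (0,0,0,0), namely (x,y,z,w) = (0,0,1,0). In particular, there exists a del Pezzo surface of degree 2 over 𝔽₂ with a unique 𝔽₂-rational point. -/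
open MvPolynomial

/-- There exists a ternary quartic form `G₄` over `𝔽₂` such that the equation
`w² + w·(x² + x·y + y²) + G₄(x,y,z) = 0` has exactly one nonzero solution in `𝔽₂⁴`,
namely `(0,0,1,0)`; in particular there exists a del Pezzo surface of degree 2 over `𝔽₂`
with a unique `𝔽₂`-rational point. -/
theorem stmt_14 :
    ∃ G₄ : MvPolynomial (Fin 3) (ZMod 2), G₄.IsHomogeneous 4 ∧
      ∀ x y z w : ZMod 2, ¬(x = 0 ∧ y = 0 ∧ z = 0 ∧ w = 0) →
        (w ^ 2 + w * (x ^ 2 + x * y + y ^ 2) + eval ![x, y, z] G₄ = 0 ↔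
          (x = 0 ∧ y = 0 ∧ z = 1 ∧ w = 0)) := by
  refine ⟨X 0 ^ 4 + X 0 ^ 2 * X 1 ^ 2 + X 1 ^ 4, ?_, ?_⟩
  · exact (((isHomogeneous_X _ 0).pow 4).add
      (((isHomogeneous_X _ 0).pow 2).mul ((isHomogeneous_X _ 1).pow 2))).add
      ((isHomogeneous_X _ 1).pow 4)
  · intro x y z w h
    simp only [map_add, map_pow, map_mul, eval_X, Matrix.cons_val_zero, Matrix.cons_val_one,
      Matrix.head_cons]
    revert h
    revert x y z w
    decide
end
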